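/- arXiv:1410.8253 — 8 statements merged into one kernel-verified Lean document; each statement's English description precedes it below -/
import Mathlib

section
/- Let g ≥ 0, b ≤ 0 with (b, g) ≠ (0, 0), and let 0 < δmax ≤ π/2. Define p̂ = g(1 − cos(−δmax)) − b·sin(−δmax) and q̂ = −b(1 − cos(−δmax)) − g·sin(−δmax). For any Δ with 0 ≤ Δ ≤ δmax, define p(Δ) = g(1 − cos(−Δ)) − b·sin(−Δ) and q(Δ) = −b(1 − cos(−Δ)) − g·sin(−Δ). Then p(Δ)·q̂ ≤ q(Δ)·p̂. -/
open Real

lemma key (δ Δ : ℝ) (hΔ0 : 0 ≤ Δ) (hΔ : Δ ≤ δ) (hδ : δ ≤ π / 2) :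
    (1 - Real.cos Δ) * Real.sin δ ≤ Real.sin Δ * (1 - Real.cos δ) := by
  have ha : Δ = 2 * (Δ / 2) := by ring
  have hc : δ = 2 * (δ / 2) := by ring
  rw [ha, hc, Real.sin_two_mul, Real.sin_two_mul, Real.cos_two_mul, Real.cos_two_mul]
  have h1 : Real.sin (Δ / 2) ≥ 0 := Real.sin_nonneg_of_nonneg_of_le_pi (by linarith)
    (by linarith [Real.pi_pos])
  have h2 : Real.sin (δ / 2) ≥ 0 := Real.sin_nonneg_of_nonneg_of_le_pi (by linarith)
    (by linarith [Real.pi_pos])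
  have h3 : Real.sin (δ / 2 - Δ / 2) ≥ 0 := Real.sin_nonneg_of_nonneg_of_le_pi
    (by linarith) (by linarith [Real.pi_pos])
  rw [Real.sin_sub] at h3
  have hpa : Real.sin (Δ / 2) ^ 2 + Real.cos (Δ / 2) ^ 2 = 1 := Real.sin_sq_add_cos_sq _
  have hpc : Real.sin (δ / 2) ^ 2 + Real.cos (δ / 2) ^ 2 = 1 := Real.sin_sq_add_cos_sq _
  have e1 : 1 - (2 * Real.cos (Δ / 2) ^ 2 - 1) = 2 * Real.sin (Δ / 2) ^ 2 := by linarith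
  have e2 : 1 - (2 * Real.cos (δ / 2) ^ 2 - 1) = 2 * Real.sin (δ / 2) ^ 2 := by linarith
  rw [e1, e2]
  nlinarith [mul_nonneg (mul_nonneg h1 h2) h3]

theorem stmt_1 (g b δmax Δ : ℝ) (hg : 0 ≤ g) (hb : b ≤ 0) (hbg : (b, g) ≠ (0, 0))
    (hδ0 : 0 < δmax) (hδ : δmax ≤ π / 2) (hΔ0 : 0 ≤ Δ) (hΔ : Δ ≤ δmax) :
    (g * (1 - Real.cos (-Δ)) - b * Real.sin (-Δ)) *
        (-b * (1 - Real.cos (-δmax)) - g * Real.sin (-δmax)) ≤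
      (-b * (1 - Real.cos (-Δ)) - g * Real.sin (-Δ)) *
        (g * (1 - Real.cos (-δmax)) - b * Real.sin (-δmax)) := by
  rw [Real.cos_neg, Real.cos_neg, Real.sin_neg, Real.sin_neg]
  have h := key δmax Δ hΔ0 hΔ hδ
  nlinarith [sq_nonneg g, sq_nonneg b, h, mul_nonneg (sq_nonneg g)
    (sub_nonneg.mpr h), mul_nonneg (sq_nonneg b) (sub_nonneg.mpr h)]
end

section
/- Let g ≥ 0, b ≤ 0 with (b, g) ≠ (0, 0), and let 0 < δmax ≤ π/2. With p(Δ) = g(1 − cos(−Δ)) − b·sin(−Δ), q(Δ) = −b(1 − cos(−Δ)) − g·sin(−Δ), p̂ = p(δmax), q̂ = q(δmax), and 0 ≤ Δ ≤ δmax, we have p(Δ)·q̂ = q(Δ)·p̂ if and only if Δ = 0 or Δ = δmax. -/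
open Real
theorem stmt_2 (g b δmax Δ : ℝ) (hg : 0 ≤ g) (hb : b ≤ 0) (hbg : (b, g) ≠ (0, 0))
    (hδ0 : 0 < δmax) (hδ : δmax ≤ π / 2) (hΔ0 : 0 ≤ Δ) (hΔ : Δ ≤ δmax) :
    (g * (1 - Real.cos (-Δ)) - b * Real.sin (-Δ)) *
        (-b * (1 - Real.cos (-δmax)) - g * Real.sin (-δmax)) =
      (-b * (1 - Real.cos (-Δ)) - g * Real.sin (-Δ)) *
        (g * (1 - Real.cos (-δmax)) - b * Real.sin (-δmax)) ↔ Δ = 0 ∨ Δ = δmax := by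
  have hpi := Real.pi_pos
  constructor
  · intro h
    simp only [Real.cos_neg, Real.sin_neg] at h
    have hc1 : Real.cos Δ = 1 - 2 * Real.sin (Δ / 2) ^ 2 := by
      have h1 := Real.cos_two_mul (Δ / 2)
      have h2 := Real.sin_sq_add_cos_sq (Δ / 2)
      have : (2 : ℝ) * (Δ / 2) = Δ := by ring
      rw [this] at h1; linarith
    have hc2 : Real.cos δmax = 1 - 2 * Real.sin (δmax / 2) ^ 2 := by
      have h1 := Real.cos_two_mul (δmax / 2)
      have h2 := Real.sin_sq_add_cos_sq (δmax / 2)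
      have : (2 : ℝ) * (δmax / 2) = δmax := by ring
      rw [this] at h1; linarith
    have hs1 : Real.sin Δ = 2 * Real.sin (Δ / 2) * Real.cos (Δ / 2) := by
      rw [← Real.sin_two_mul]; ring_nf
    have hs2 : Real.sin δmax = 2 * Real.sin (δmax / 2) * Real.cos (δmax / 2) := by
      rw [← Real.sin_two_mul]; ring_nf
    have key : (g ^ 2 + b ^ 2) *
        (4 * Real.sin (Δ / 2) * Real.sin (δmax / 2) * Real.sin (Δ / 2 - δmax / 2)) = 0 := by
      rw [Real.sin_sub]
      rw [hc1, hc2, hs1, hs2] at h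
      linear_combination h
    have hgb : 0 < g ^ 2 + b ^ 2 := by
      rcases eq_or_lt_of_le hg with hg0 | hg0
      · rcases eq_or_lt_of_le hb with hb0 | hb0
        · exfalso; apply hbg; rw [← hg0, hb0]
        · nlinarith
      · nlinarith
    have hsδ : 0 < Real.sin (δmax / 2) := by
      apply Real.sin_pos_of_pos_of_lt_pi <;> linarith
    have h3 : 4 * Real.sin (Δ / 2) * Real.sin (δmax / 2) * Real.sin (Δ / 2 - δmax / 2) = 0 :=
      (mul_eq_zero.mp key).resolve_left (ne_of_gt hgb)
    rcases mul_eq_zero.mp h3 with h4 | h4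
    · rcases mul_eq_zero.mp h4 with h5 | h5
      · rcases mul_eq_zero.mp h5 with h6 | h6
        · norm_num at h6
        · left
          have : Δ / 2 = 0 := by
            rw [← Real.sin_eq_zero_iff_of_lt_of_lt (by linarith) (by linarith)]
            exact h6
          linarith
      · exact absurd h5 (ne_of_gt hsδ)
    · right
      have : Δ / 2 - δmax / 2 = 0 := by
        rw [← Real.sin_eq_zero_iff_of_lt_of_lt (by linarith) (by linarith)]
        exact h4
      linarith
  · rintro (rfl | rfl)
    · simp
    · ring
end

section
/- Let 0 < δmax ≤ π/2, g ≥ 0, b ≤ 0 satisfy g(1 − cos(−δmax)) − b·sin(−δmax) < 0. Then for any Δ with |Δ| ≤ δmax, if g(1 − cos Δ) − b·sin Δ ≥ 0 then Δ ≥ 0. -/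
open Real

lemma key_mono {δ δm : ℝ} (h0 : 0 < δ) (h1 : δ ≤ δm) (h2 : δm ≤ π / 2) :
    (1 - Real.cos δ) * Real.sin δm ≤ (1 - Real.cos δm) * Real.sin δ := by
  have hpi := Real.pi_pos
  have ha : 0 ≤ Real.sin (δ / 2) :=
    Real.sin_nonneg_of_nonneg_of_le_pi (by linarith) (by linarith)
  have hm : 0 ≤ Real.sin (δm / 2) :=
    Real.sin_nonneg_of_nonneg_of_le_pi (by linarith) (by linarith)
  have hs : Real.sin (δ / 2 - δm / 2) ≤ 0 :=
    Real.sin_nonpos_of_nonpos_of_neg_pi_le (by linarith) (by linarith)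
  rw [Real.sin_sub] at hs
  have e1 : Real.sin δ = 2 * Real.sin (δ / 2) * Real.cos (δ / 2) := by
    rw [← Real.sin_two_mul]; ring_nf
  have e2 : Real.sin δm = 2 * Real.sin (δm / 2) * Real.cos (δm / 2) := by
    rw [← Real.sin_two_mul]; ring_nf
  have e3 : Real.cos δ = 1 - 2 * Real.sin (δ / 2) ^ 2 := by
    have := Real.cos_two_mul (δ / 2)
    have h := Real.sin_sq_add_cos_sq (δ / 2)
    rw [show 2 * (δ / 2) = δ by ring] at this
    nlinarith
  have e4 : Real.cos δm = 1 - 2 * Real.sin (δm / 2) ^ 2 := by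
    have := Real.cos_two_mul (δm / 2)
    have h := Real.sin_sq_add_cos_sq (δm / 2)
    rw [show 2 * (δm / 2) = δm by ring] at this
    nlinarith
  rw [e1, e2, e3, e4]
  nlinarith [mul_nonneg ha hm, mul_nonneg (mul_nonneg ha hm) (neg_nonneg.2 hs)]

theorem stmt_3 (g b δmax Δ : ℝ) (hg : 0 ≤ g) (hb : b ≤ 0)
    (hδ0 : 0 < δmax) (hδ : δmax ≤ π / 2)
    (hneg : g * (1 - Real.cos (-δmax)) - b * Real.sin (-δmax) < 0)
    (hΔ : |Δ| ≤ δmax)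
    (hpos : g * (1 - Real.cos Δ) - b * Real.sin Δ ≥ 0) : Δ ≥ 0 := by
  by_contra h
  push_neg at h
  have hpi := Real.pi_pos
  set δ := -Δ with hδdef
  have hδpos : 0 < δ := by simp [hδdef]; linarith
  have hδle : δ ≤ δmax := by
    rw [abs_le] at hΔ; simp [hδdef]; linarith [hΔ.1]
  rw [Real.cos_neg, Real.sin_neg] at hneg
  have hcos : Real.cos Δ = Real.cos δ := by rw [hδdef, Real.cos_neg]
  have hsin : Real.sin Δ = -Real.sin δ := by rw [hδdef, Real.sin_neg, neg_neg]
  rw [hcos, hsin] at hpos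
  have hsδ : 0 < Real.sin δ :=
    Real.sin_pos_of_pos_of_lt_pi hδpos (by linarith)
  have hsm : 0 < Real.sin δmax :=
    Real.sin_pos_of_pos_of_lt_pi hδ0 (by linarith)
  have hM := key_mono hδpos hδle hδ
  -- hneg : g * (1 - cos δmax) - b * -(sin δmax) < 0, i.e. g(1-cosδm) + b sinδm < 0
  nlinarith [mul_le_mul_of_nonneg_left hM hg, mul_pos hsδ hsm,
    mul_lt_mul_of_pos_right hneg hsδ]
end

section
/- Let g ≥ 0, b ≤ 0, 0 < δmax ≤ π/2, with p̂ = g(1 − cos δmax) + b·sin δmax < 0 and q̂ = −b(1 − cos δmax) + g·sin δmax. Let M be a finite set of positive natural numbers and w a positive natural number. If there exists V ⊆ M with ∑_{x∈V} x = w, then there exist phase angles θ_x ∈ [0, δmax] for x ∈ M such that ∑_{x∈M} x·(g(1 − cos(−θ_x)) − b·sin(−θ_x)) = w·p̂ and ∑_{x∈M} x·(−b(1 − cos(−θ_x)) − g·sin(−θ_x)) = w·q̂, and for every x ∈ M, x·(g(1 − cos θ_x) − b·sin θ_x) ≥ 0. -/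
open Real
theorem stmt_9 (g b δmax : ℝ) (hg : 0 ≤ g) (hb : b ≤ 0)
    (hδ0 : 0 < δmax) (hδ : δmax ≤ π / 2)
    (hp : g * (1 - Real.cos δmax) + b * Real.sin δmax < 0)
    (M : Finset ℕ) (hM : ∀ x ∈ M, 0 < x) (w : ℕ) (hw : 0 < w)
    (V : Finset ℕ) (hVM : V ⊆ M) (hV : ∑ x ∈ V, x = w) :
    ∃ θ : ℕ → ℝ, (∀ x ∈ M, 0 ≤ θ x ∧ θ x ≤ δmax) ∧
      (∑ x ∈ M, (x : ℝ) * (g * (1 - Real.cos (-θ x)) - b * Real.sin (-θ x)) =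
        (w : ℝ) * (g * (1 - Real.cos δmax) + b * Real.sin δmax)) ∧
      (∑ x ∈ M, (x : ℝ) * (-b * (1 - Real.cos (-θ x)) - g * Real.sin (-θ x)) =
        (w : ℝ) * (-b * (1 - Real.cos δmax) + g * Real.sin δmax)) ∧
      (∀ x ∈ M, 0 ≤ (x : ℝ) * (g * (1 - Real.cos (θ x)) - b * Real.sin (θ x))) := by
  classical
  refine ⟨fun x => if x ∈ V then δmax else 0, ?_, ?_, ?_, ?_⟩
  · intro x _
    by_cases h : x ∈ V <;> simp [h, hδ0.le]
  · rw [← Finset.sum_subset hVM (fun x hx hxV => by simp [hxV])]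
    rw [show ((w:ℝ)) = ((∑ x ∈ V, x : ℕ) : ℝ) by rw [hV], Nat.cast_sum,
      Finset.sum_mul]
    apply Finset.sum_congr rfl
    intro x hx
    simp [hx, Real.cos_neg, Real.sin_neg]
  · rw [← Finset.sum_subset hVM (fun x hx hxV => by simp [hxV])]
    rw [show ((w:ℝ)) = ((∑ x ∈ V, x : ℕ) : ℝ) by rw [hV], Nat.cast_sum,
      Finset.sum_mul]
    apply Finset.sum_congr rfl
    intro x hx
    simp [hx, Real.cos_neg, Real.sin_neg]
  · intro x hx
    by_cases h : x ∈ V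
    · simp only [h, if_pos]
      have h1 : 0 ≤ 1 - Real.cos δmax := by
        have := Real.cos_le_one δmax; linarith
      have h2 : 0 ≤ Real.sin δmax :=
        Real.sin_nonneg_of_nonneg_of_le_pi hδ0.le (by linarith [Real.pi_pos])
      have : 0 ≤ g * (1 - Real.cos δmax) - b * Real.sin δmax := by nlinarith
      positivity
    · simp [h]
end

section
/- Let g ≥ 0, b ≤ 0, 0 < δmax ≤ π/2, with p̂ = g(1 − cos δmax) + b·sin δmax < 0 and q̂ = −b(1 − cos δmax) + g·sin δmax > 0. Let M be a finite set of positive natural numbers and w a positive natural number. Suppose there exist angles θ_x ∈ [−δmax, δmax] for x ∈ M with: (i) x·(g(1 − cos θ_x) − b·sin θ_x) ≥ 0 for all x ∈ M; (ii) ∑_{x∈M} x·(g(1 − cos(−θ_x)) − b·sin(−θ_x)) = w·p̂; (iii) ∑_{x∈M} x·(−b(1 − cos(−θ_x)) − g·sin(−θ_x)) = w·q̂. Then V := {x ∈ M : θ_x > 0} satisfies ∑_{x∈V} x = w. -/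
open Real

lemma aux_ratio (δ φ : ℝ) (h0 : 0 ≤ φ) (h1 : φ ≤ δ) (h2 : δ ≤ π/2) :
    Real.sin δ * (1 - Real.cos φ) ≤ (1 - Real.cos δ) * Real.sin φ := by
  have hpi : δ ≤ π := by linarith [Real.pi_pos]
  have hsφ : 0 ≤ Real.sin φ := Real.sin_nonneg_of_nonneg_of_le_pi h0 (by linarith)
  have hs2 : 0 ≤ Real.sin (δ - φ) :=
    Real.sin_nonneg_of_nonneg_of_le_pi (by linarith) (by linarith)
  have hc1 : Real.cos (δ - φ) ≤ 1 := Real.cos_le_one _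
  have hc2 : Real.cos φ ≤ 1 := Real.cos_le_one _
  have e : Real.sin δ = Real.sin φ * Real.cos (δ - φ) + Real.cos φ * Real.sin (δ - φ) := by
    rw [← Real.sin_add]; ring_nf
  have hsub : Real.sin (δ - φ) = Real.sin δ * Real.cos φ - Real.cos δ * Real.sin φ :=
    Real.sin_sub δ φ
  nlinarith [mul_nonneg hsφ (sub_nonneg.2 hc1), mul_nonneg hs2 (sub_nonneg.2 hc2)]

lemma aux_ratio_strict (δ φ : ℝ) (h0 : 0 < φ) (h1 : φ < δ) (h2 : δ ≤ π/2) :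
    Real.sin δ * (1 - Real.cos φ) < (1 - Real.cos δ) * Real.sin φ := by
  have hpi : δ ≤ π := by linarith [Real.pi_pos]
  have hsφ : 0 < Real.sin φ := Real.sin_pos_of_pos_of_lt_pi h0 (by linarith [Real.pi_pos])
  have hs2 : 0 ≤ Real.sin (δ - φ) :=
    Real.sin_nonneg_of_nonneg_of_le_pi (by linarith) (by linarith)
  have hc1 : Real.cos (δ - φ) < 1 := by
    have := Real.cos_lt_cos_of_nonneg_of_le_pi (le_refl 0) (by linarith) (show (0:ℝ) < δ - φ by linarith)
    simpa using this
  have hc2 : Real.cos φ ≤ 1 := Real.cos_le_one _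
  have e : Real.sin δ = Real.sin φ * Real.cos (δ - φ) + Real.cos φ * Real.sin (δ - φ) := by
    rw [← Real.sin_add]; ring_nf
  have hsub : Real.sin (δ - φ) = Real.sin δ * Real.cos φ - Real.cos δ * Real.sin φ :=
    Real.sin_sub δ φ
  nlinarith [mul_pos hsφ (sub_pos.2 hc1), mul_nonneg hs2 (sub_nonneg.2 hc2)]

theorem stmt_10 (g b δmax : ℝ) (hg : 0 ≤ g) (hb : b ≤ 0)
    (hδ0 : 0 < δmax) (hδ : δmax ≤ π / 2)
    (hp : g * (1 - Real.cos δmax) + b * Real.sin δmax < 0)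
    (hq : 0 < -b * (1 - Real.cos δmax) + g * Real.sin δmax)
    (M : Finset ℕ) (hM : ∀ x ∈ M, 0 < x) (w : ℕ) (hw : 0 < w)
    (θ : ℕ → ℝ) (hθ : ∀ x ∈ M, -δmax ≤ θ x ∧ θ x ≤ δmax)
    (hgen : ∀ x ∈ M, 0 ≤ (x : ℝ) * (g * (1 - Real.cos (θ x)) - b * Real.sin (θ x)))
    (hreal : ∑ x ∈ M, (x : ℝ) * (g * (1 - Real.cos (-θ x)) - b * Real.sin (-θ x)) =
      (w : ℝ) * (g * (1 - Real.cos δmax) + b * Real.sin δmax))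
    (hreac : ∑ x ∈ M, (x : ℝ) * (-b * (1 - Real.cos (-θ x)) - g * Real.sin (-θ x)) =
      (w : ℝ) * (-b * (1 - Real.cos δmax) + g * Real.sin δmax)) :
    ∑ x ∈ M.filter (fun x => 0 < θ x), x = w := by
  have hpi : δmax ≤ π := by linarith [Real.pi_pos]
  have hS : 0 < Real.sin δmax := Real.sin_pos_of_pos_of_lt_pi hδ0 (by linarith [Real.pi_pos])
  have hU : 0 < 1 - Real.cos δmax := by
    have := Real.cos_lt_cos_of_nonneg_of_le_pi (le_refl 0) hpi hδ0
    simp at this; linarith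
  have hb' : b < 0 := by
    rcases lt_or_eq_of_le hb with h | h
    · exact h
    · exfalso; rw [← h] at hp; nlinarith [mul_nonneg hg hU.le]
  -- simplified balance equations
  set P : ℝ → ℝ := fun t => g * (1 - Real.cos t) + b * Real.sin t with hP
  set Q : ℝ → ℝ := fun t => -b * (1 - Real.cos t) + g * Real.sin t with hQ
  have hreal' : ∑ x ∈ M, (x : ℝ) * P (θ x) = (w : ℝ) * P δmax := by
    rw [← hreal]
    exact Finset.sum_congr rfl fun x _ => by
      simp only [hP, Real.cos_neg, Real.sin_neg]; ring
  have hreac' : ∑ x ∈ M, (x : ℝ) * Q (θ x) = (w : ℝ) * Q δmax := by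
    rw [← hreac]
    exact Finset.sum_congr rfl fun x _ => by
      simp only [hQ, Real.cos_neg, Real.sin_neg]; ring
  -- P is negative on (0, δmax]
  have hPneg : ∀ φ : ℝ, 0 < φ → φ ≤ δmax → P φ < 0 := by
    intro φ h0 h1
    have hsφ : 0 ≤ Real.sin φ := Real.sin_nonneg_of_nonneg_of_le_pi h0.le (by linarith)
    have hcφ : Real.cos φ < 1 := by
      have := Real.cos_lt_cos_of_nonneg_of_le_pi (le_refl 0) (by linarith) h0
      simpa using this
    have hQφ : 0 < Q φ := by
      simp only [hQ]
      nlinarith [mul_nonneg hg hsφ]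
    have hratio := aux_ratio δmax φ h0.le h1 hδ
    by_contra hcon
    push_neg at hcon
    simp only [hP] at hcon
    have A : 0 ≤ (-b * (1 - Real.cos δmax) + g * Real.sin δmax) *
        (g * (1 - Real.cos φ) + b * Real.sin φ) := mul_nonneg hq.le hcon
    have B : (g * (1 - Real.cos δmax) + b * Real.sin δmax) *
        (-b * (1 - Real.cos φ) + g * Real.sin φ) < 0 := by
      apply mul_neg_of_neg_of_pos hp
      simpa [hQ] using hQφ
    have C : (g^2 + b^2) * (Real.sin δmax * (1 - Real.cos φ)
        - (1 - Real.cos δmax) * Real.sin φ) ≤ 0 :=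
      mul_nonpos_of_nonneg_of_nonpos (by positivity) (by linarith)
    nlinarith [A, B, C]
  -- all angles nonnegative
  have hθ0 : ∀ x ∈ M, 0 ≤ θ x := by
    intro x hx
    by_contra hneg
    push_neg at hneg
    have h1 : -θ x ≤ δmax := by linarith [(hθ x hx).1]
    have hPn := hPneg (-θ x) (by linarith) h1
    have hg' := hgen x hx
    have : (x : ℝ) * (g * (1 - Real.cos (θ x)) - b * Real.sin (θ x)) < 0 := by
      have hx0 : (0:ℝ) < (x:ℝ) := by exact_mod_cast hM x hx
      have : g * (1 - Real.cos (θ x)) - b * Real.sin (θ x) = P (-θ x) := by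
        simp only [hP, Real.cos_neg, Real.sin_neg]; ring
      rw [this]
      exact mul_neg_of_pos_of_neg hx0 hPn
    linarith
  -- the combined sum is zero, with nonpositive terms
  have hsum : ∑ x ∈ M, (x : ℝ) * (Q δmax * P (θ x) - P δmax * Q (θ x)) = 0 := by
    have : ∑ x ∈ M, (x : ℝ) * (Q δmax * P (θ x) - P δmax * Q (θ x)) =
        Q δmax * ∑ x ∈ M, (x : ℝ) * P (θ x) - P δmax * ∑ x ∈ M, (x : ℝ) * Q (θ x) := by
      rw [Finset.mul_sum, Finset.mul_sum, ← Finset.sum_sub_distrib]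
      exact Finset.sum_congr rfl fun x _ => by ring
    rw [this, hreal', hreac']; ring
  have hterm : ∀ x ∈ M, (x : ℝ) * (Q δmax * P (θ x) - P (δmax) * Q (θ x)) =
      (x : ℝ) * (g^2 + b^2) * (Real.sin δmax * (1 - Real.cos (θ x))
        - (1 - Real.cos δmax) * Real.sin (θ x)) := by
    intro x _; simp only [hP, hQ]; ring
  have hnonpos : ∀ x ∈ M, (x : ℝ) * (Q δmax * P (θ x) - P δmax * Q (θ x)) ≤ 0 := by
    intro x hx
    rw [hterm x hx]
    have := aux_ratio δmax (θ x) (hθ0 x hx) (hθ x hx).2 hδ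
    have hx0 : (0:ℝ) ≤ (x:ℝ) := Nat.cast_nonneg x
    apply mul_nonpos_of_nonneg_of_nonpos
    · exact mul_nonneg hx0 (by positivity)
    · linarith
  have hzero : ∀ x ∈ M, (x : ℝ) * (Q δmax * P (θ x) - P δmax * Q (θ x)) = 0 := by
    intro x hx
    have h := (Finset.sum_eq_zero_iff_of_nonpos hnonpos).1 hsum x hx
    exact h
  -- each θ x is 0 or δmax
  have hdict : ∀ x ∈ M, θ x = 0 ∨ θ x = δmax := by
    intro x hx
    by_contra hcon
    push_neg at hcon
    obtain ⟨h1, h2⟩ := hcon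
    have h0 : 0 < θ x := lt_of_le_of_ne (hθ0 x hx) (Ne.symm h1)
    have hlt : θ x < δmax := lt_of_le_of_ne (hθ x hx).2 h2
    have hstrict := aux_ratio_strict δmax (θ x) h0 hlt hδ
    have hz := hzero x hx
    rw [hterm x hx] at hz
    have hx0 : (0:ℝ) < (x:ℝ) := by exact_mod_cast hM x hx
    have hgb : 0 < g^2 + b^2 := by nlinarith [sq_nonneg g, mul_pos (neg_pos.2 hb') (neg_pos.2 hb')]
    have hlt0 : (x : ℝ) * (g^2 + b^2) * (Real.sin δmax * (1 - Real.cos (θ x))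
        - (1 - Real.cos δmax) * Real.sin (θ x)) < 0 :=
      mul_neg_of_pos_of_neg (mul_pos hx0 hgb) (by linarith)
    linarith
  -- conclude
  have hsplit : ∑ x ∈ M.filter (fun x => 0 < θ x), ((x : ℝ)) * P δmax = (w : ℝ) * P δmax := by
    rw [← hreal']
    rw [← Finset.sum_filter_add_sum_filter_not M (fun x => 0 < θ x)]
    have h1 : ∀ x ∈ M.filter (fun x => 0 < θ x), (x : ℝ) * P (θ x) = (x : ℝ) * P δmax := by
      intro x hx
      obtain ⟨hxM, hxpos⟩ := Finset.mem_filter.1 hx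
      rcases hdict x hxM with h | h
      · exfalso; rw [h] at hxpos; exact lt_irrefl 0 hxpos
      · rw [h]
    have h2 : ∀ x ∈ M.filter (fun x => ¬ 0 < θ x), (x : ℝ) * P (θ x) = 0 := by
      intro x hx
      obtain ⟨hxM, hxnpos⟩ := Finset.mem_filter.1 hx
      rcases hdict x hxM with h | h
      · rw [h]; simp [hP]
      · exfalso; exact hxnpos (h ▸ hδ0)
    rw [Finset.sum_congr rfl h1, Finset.sum_congr rfl h2, Finset.sum_const_zero, add_zero]
  have hcast : ((∑ x ∈ M.filter (fun x => 0 < θ x), x : ℕ) : ℝ) = (w : ℝ) := by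
    have : (∑ x ∈ M.filter (fun x => 0 < θ x), ((x : ℝ))) * P δmax = (w : ℝ) * P δmax := by
      rw [Finset.sum_mul]; exact hsplit
    have hPδ : P δmax ≠ 0 := ne_of_lt hp
    have := mul_right_cancel₀ hPδ this
    push_cast
    exact this
  exact_mod_cast hcast
end

section
/- Let g ≥ 0, b ≤ 0 with (b,g) ≠ (0,0), 0 < δmax ≤ π/2, p̂ = g(1 − cos δmax) + b·sin δmax, q̂ = −b(1 − cos δmax) + g·sin δmax, and suppose p̂ < 0 (hence q̂ > 0). If Δ ∈ [0, δmax] satisfies (g(1−cos Δ)+b·sin Δ)·q̂ = (−b(1−cos Δ)+g·sin Δ)·p̂ and Δ > 0, then Δ = δmax and g(1−cos Δ)+b·sin Δ = p̂. -/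
open Real
theorem stmt_11 (g b δmax Δ : ℝ) (hg : 0 ≤ g) (hb : b ≤ 0) (hbg : (b, g) ≠ (0, 0))
    (hδ0 : 0 < δmax) (hδ : δmax ≤ π / 2)
    (hp : g * (1 - Real.cos δmax) + b * Real.sin δmax < 0)
    (hΔ0 : 0 ≤ Δ) (hΔ : Δ ≤ δmax)
    (heq : (g * (1 - Real.cos Δ) + b * Real.sin Δ) *
        (-b * (1 - Real.cos δmax) + g * Real.sin δmax) =
      (-b * (1 - Real.cos Δ) + g * Real.sin Δ) *
        (g * (1 - Real.cos δmax) + b * Real.sin δmax))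
    (hpos : 0 < Δ) :
    Δ = δmax ∧ g * (1 - Real.cos Δ) + b * Real.sin Δ =
      g * (1 - Real.cos δmax) + b * Real.sin δmax := by
  have hgb2 : 0 < g ^ 2 + b ^ 2 := by
    rcases eq_or_ne b 0 with hb0 | hb0
    · have hg0 : g ≠ 0 := by intro h; exact hbg (by simp [hb0, h])
      positivity
    · positivity
  have hE : (g ^ 2 + b ^ 2) *
      ((1 - Real.cos Δ) * Real.sin δmax - Real.sin Δ * (1 - Real.cos δmax)) = 0 := by
    linear_combination heq
  have hE0 : (1 - Real.cos Δ) * Real.sin δmax - Real.sin Δ * (1 - Real.cos δmax) = 0 := by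
    rcases mul_eq_zero.mp hE with h | h
    · exact absurd h hgb2.ne'
    · exact h
  have hcΔ : Real.cos Δ = 1 - 2 * Real.sin (Δ / 2) ^ 2 := by
    have h := Real.cos_two_mul (Δ / 2)
    rw [show 2 * (Δ / 2) = Δ by ring] at h
    linarith [Real.sin_sq_add_cos_sq (Δ / 2)]
  have hsΔ : Real.sin Δ = 2 * Real.sin (Δ / 2) * Real.cos (Δ / 2) := by
    rw [← Real.sin_two_mul]; ring_nf
  have hcδ : Real.cos δmax = 1 - 2 * Real.sin (δmax / 2) ^ 2 := by
    have h := Real.cos_two_mul (δmax / 2)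
    rw [show 2 * (δmax / 2) = δmax by ring] at h
    linarith [Real.sin_sq_add_cos_sq (δmax / 2)]
  have hsδ : Real.sin δmax = 2 * Real.sin (δmax / 2) * Real.cos (δmax / 2) := by
    rw [← Real.sin_two_mul]; ring_nf
  have hfac : 4 * Real.sin (Δ / 2) * Real.sin (δmax / 2) *
      Real.sin ((Δ - δmax) / 2) = 0 := by
    have hsub : Real.sin ((Δ - δmax) / 2) =
        Real.sin (Δ / 2) * Real.cos (δmax / 2) - Real.cos (Δ / 2) * Real.sin (δmax / 2) := by
      rw [show (Δ - δmax) / 2 = Δ / 2 - δmax / 2 by ring, Real.sin_sub]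
    rw [hsub]
    rw [hcΔ, hsΔ, hcδ, hsδ] at hE0
    nlinarith [hE0]
  have hπ : 0 < π := Real.pi_pos
  have hsΔpos : 0 < Real.sin (Δ / 2) := by
    apply Real.sin_pos_of_pos_of_lt_pi (by linarith)
    nlinarith
  have hsδpos : 0 < Real.sin (δmax / 2) := by
    apply Real.sin_pos_of_pos_of_lt_pi (by linarith)
    nlinarith
  have hz : Real.sin ((Δ - δmax) / 2) = 0 := by
    rcases mul_eq_zero.mp hfac with h | h
    · rcases mul_eq_zero.mp h with h' | h'
      · rcases mul_eq_zero.mp h' with h'' | h''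
        · norm_num at h''
        · exact absurd h'' hsΔpos.ne'
      · exact absurd h' hsδpos.ne'
    · exact h
  have hΔeq : Δ = δmax := by
    have h1 : -π < (Δ - δmax) / 2 := by linarith
    have h2 : (Δ - δmax) / 2 < π := by linarith
    have := (Real.sin_eq_zero_iff_of_lt_of_lt h1 h2).mp hz
    linarith
  exact ⟨hΔeq, by rw [hΔeq]⟩
end

section
/- For g ≥ 0, b ≤ 0 with (b,g) ≠ (0,0), the function Δ ↦ (g(1 − cos Δ) + b·sin Δ)·(−b(1 − cos δmax) + g·sin δmax) − (−b(1 − cos Δ) + g·sin Δ)·(g(1 − cos δmax) + b·sin δmax) is strictly negative for Δ ∈ (0, δmax), where 0 < δmax ≤ π/2. -/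
open Real
theorem stmt_14 (g b δmax Δ : ℝ) (hg : 0 ≤ g) (hb : b ≤ 0) (hbg : (b, g) ≠ (0, 0))
    (hδ0 : 0 < δmax) (hδ : δmax ≤ π / 2) (hΔ0 : 0 < Δ) (hΔ : Δ < δmax) :
    (g * (1 - Real.cos Δ) + b * Real.sin Δ) *
        (-b * (1 - Real.cos δmax) + g * Real.sin δmax) -
      (-b * (1 - Real.cos Δ) + g * Real.sin Δ) *
        (g * (1 - Real.cos δmax) + b * Real.sin δmax) < 0 := by
  have hbg2 : 0 < b ^ 2 + g ^ 2 := by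
    rcases eq_or_lt_of_le hb with hb0 | hb0
    · have hg0 : g ≠ 0 := by
        intro h; exact hbg (by simp [← hb0, h])
      positivity
    · nlinarith
  have hpi : π ≤ π := le_refl π
  have h1 : Δ / 2 < δmax / 2 := by linarith
  have h2 : 0 < Δ / 2 := by linarith
  have h3 : δmax / 2 ≤ π / 4 := by linarith
  have hppos : (0:ℝ) < π := Real.pi_pos
  have hsa : 0 < Real.sin (Δ / 2) := Real.sin_pos_of_pos_of_lt_pi h2 (by linarith)
  have hsc : 0 < Real.sin (δmax / 2) := Real.sin_pos_of_pos_of_lt_pi (by linarith) (by linarith)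
  have hsd : Real.sin ((Δ - δmax) / 2) < 0 := by
    have : Real.sin (-((δmax - Δ) / 2)) < 0 := by
      rw [Real.sin_neg, neg_neg_iff_pos]
      · exact Real.sin_pos_of_pos_of_lt_pi (by linarith) (by linarith)
    convert this using 2
    ring
  have key : (1 - Real.cos Δ) * Real.sin δmax - Real.sin Δ * (1 - Real.cos δmax)
      = 4 * Real.sin (Δ / 2) * Real.sin (δmax / 2) * Real.sin ((Δ - δmax) / 2) := by
    have e1 : 1 - Real.cos Δ = 2 * Real.sin (Δ / 2) ^ 2 := by
      have := Real.sin_sq_eq_half_sub (Δ / 2)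
      rw [show 2 * (Δ / 2) = Δ by ring] at this
      linarith
    have e2 : 1 - Real.cos δmax = 2 * Real.sin (δmax / 2) ^ 2 := by
      have := Real.sin_sq_eq_half_sub (δmax / 2)
      rw [show 2 * (δmax / 2) = δmax by ring] at this
      linarith
    have e3 : Real.sin Δ = 2 * Real.sin (Δ / 2) * Real.cos (Δ / 2) := by
      rw [← Real.sin_two_mul]; ring_nf
    have e4 : Real.sin δmax = 2 * Real.sin (δmax / 2) * Real.cos (δmax / 2) := by
      rw [← Real.sin_two_mul]; ring_nf
    have e5 : Real.sin ((Δ - δmax) / 2)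
        = Real.sin (Δ / 2) * Real.cos (δmax / 2) - Real.cos (Δ / 2) * Real.sin (δmax / 2) := by
      rw [show (Δ - δmax) / 2 = Δ / 2 - δmax / 2 by ring, Real.sin_sub]
    rw [e1, e2, e3, e4, e5]; ring
  have hfac : (g * (1 - Real.cos Δ) + b * Real.sin Δ) *
        (-b * (1 - Real.cos δmax) + g * Real.sin δmax) -
      (-b * (1 - Real.cos Δ) + g * Real.sin Δ) *
        (g * (1 - Real.cos δmax) + b * Real.sin δmax)
      = (b ^ 2 + g ^ 2) * ((1 - Real.cos Δ) * Real.sin δmax - Real.sin Δ * (1 - Real.cos δmax)) := by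
    ring
  rw [hfac, key]
  have : 0 < 4 * Real.sin (Δ / 2) * Real.sin (δmax / 2) := by positivity
  exact mul_neg_of_pos_of_neg hbg2 (mul_neg_of_pos_of_neg this hsd)
end

section
/- Let b ≤ 0 and g ≥ 0 with −b > g·tan(δmax/2) for some 0 < δmax ≤ π/2. Then for every Δ with 0 < Δ ≤ δmax, g(1 − cos Δ) + b·sin Δ < 0. -/
open Real
theorem stmt_15 (g b δmax Δ : ℝ) (hg : 0 ≤ g) (hb : b ≤ 0)
    (hδ0 : 0 < δmax) (hδ : δmax ≤ π / 2)
    (h : -b > g * Real.tan (δmax / 2))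
    (hΔ0 : 0 < Δ) (hΔ : Δ ≤ δmax) :
    g * (1 - Real.cos Δ) + b * Real.sin Δ < 0 := by
  have hpi := Real.pi_pos
  have ht0 : 0 < Δ / 2 := by linarith
  have htlt : Δ / 2 ≤ δmax / 2 := by linarith
  have hdlt : δmax / 2 < π / 2 := by linarith
  have htan : Real.tan (Δ / 2) ≤ Real.tan (δmax / 2) := by
    apply Real.strictMonoOn_tan.monotoneOn
    · constructor <;> [linarith; linarith]
    · constructor <;> [linarith; linarith]
    · exact htlt
  have hcos : 0 < Real.cos (Δ / 2) := Real.cos_pos_of_mem_Ioo ⟨by linarith, by linarith⟩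
  have hsin : 0 < Real.sin (Δ / 2) := Real.sin_pos_of_pos_of_lt_pi ht0 (by linarith)
  have htan' : g * Real.tan (Δ / 2) < -b := lt_of_le_of_lt (by nlinarith) h
  rw [Real.tan_eq_sin_div_cos] at htan'
  have key : g * Real.sin (Δ / 2) + b * Real.cos (Δ / 2) < 0 := by
    have := (div_lt_iff₀ hcos).mp (lt_of_le_of_lt (le_of_eq (by ring)) htan' : g * Real.sin (Δ / 2) / Real.cos (Δ / 2) < -b)
    nlinarith
  have hc : Real.cos Δ = 2 * Real.cos (Δ / 2) ^ 2 - 1 := by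
    rw [show Δ = 2 * (Δ / 2) by ring, Real.cos_two_mul]; norm_num
  have hs : Real.sin Δ = 2 * Real.sin (Δ / 2) * Real.cos (Δ / 2) := by
    rw [show Δ = 2 * (Δ / 2) by ring, Real.sin_two_mul]; norm_num
  have hpyth := Real.sin_sq_add_cos_sq (Δ / 2)
  rw [hc, hs]
  nlinarith
end
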